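/- Let $(\mathcal{A}, G, \alpha)$ be a dynamical system and let $(\pi, \mu)$ be a covariant pair for $(\mathcal{A}, G, \alpha)$ on a Hilbert space $\mathcal{H}$. Then $\pi$ is $\alpha$-admissible: the formula $\widehat{\alpha}_g(T) = \mu_g T \mu_g^*$ for $T \in C^*(\pi(\mathcal{A}))$ defines a point-norm continuous action $\widehat{\alpha} : G \curvearrowright C^*(\pi(\mathcal{A}))$ by $*$-automorphisms satisfying $\widehat{\alpha}_g \circ \pi = \pi \circ \alpha_g$ for all $g \in G$. -/

import Mathlib

set_option linter.unusedVariables false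

universe u

noncomputable section

open MeasureTheory Filter Topology Set

namespace Paper

/-- The bounded operators on a complex Hilbert space. -/
abbrev BH (H : Type*) [NormedAddCommGroup H] [InnerProductSpace ℂ H] [CompleteSpace H] :=
  H →L[ℂ] H

instance piLpCompleteSpace (H : Type*) [NormedAddCommGroup H] [InnerProductSpace ℂ H]
    [CompleteSpace H] (n : ℕ) : CompleteSpace (PiLp 2 fun _ : Fin n => H) :=
  inferInstance

section Basic

variable {H K L : Type*}
  [NormedAddCommGroup H] [InnerProductSpace ℂ H] [CompleteSpace H]
  [NormedAddCommGroup K] [InnerProductSpace ℂ K] [CompleteSpace K]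
  [NormedAddCommGroup L] [InnerProductSpace ℂ L] [CompleteSpace L]

/-- An `n × n` matrix of bounded operators on `H`, viewed as a bounded operator on the
Hilbert space direct sum of `n` copies of `H`. -/
def matOp {n : ℕ} (M : Matrix (Fin n) (Fin n) (BH H)) : BH (PiLp 2 fun _ : Fin n => H) :=
  (((PiLp.continuousLinearEquiv 2 ℂ (fun _ : Fin n => H)).symm :
      ((i : Fin n) → H) →L[ℂ] PiLp 2 fun _ : Fin n => H)).comp <|
    (ContinuousLinearMap.pi fun i => ∑ j, (M i j).comp (ContinuousLinearMap.proj j)).comp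
      (((PiLp.continuousLinearEquiv 2 ℂ (fun _ : Fin n => H)) :
        (PiLp 2 fun _ : Fin n => H) →L[ℂ] ((i : Fin n) → H)))

/-- All entries of a matrix of operators belong to the set `A`. -/
def entriesIn {n : ℕ} (M : Matrix (Fin n) (Fin n) (BH H)) (A : Set (BH H)) : Prop :=
  ∀ i j, M i j ∈ A

/-- `φ` is linear on the subset `A`. -/
def IsLinearOn (φ : BH H → BH K) (A : Set (BH H)) : Prop :=
  (∀ x ∈ A, ∀ y ∈ A, φ (x + y) = φ x + φ y) ∧ (∀ (c : ℂ), ∀ x ∈ A, φ (c • x) = c • φ x)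

/-- `φ` is an algebra homomorphism on the subset `A`. -/
def IsHomOn (φ : BH H → BH K) (A : Set (BH H)) : Prop :=
  IsLinearOn φ A ∧ ∀ x ∈ A, ∀ y ∈ A, φ (x * y) = φ x * φ y

/-- `φ` is a ∗-homomorphism on the subset `A`. -/
def IsStarHomOn (φ : BH H → BH K) (A : Set (BH H)) : Prop :=
  IsHomOn φ A ∧ ∀ x ∈ A, φ (star x) = star (φ x)

/-- `φ` is completely positive on the subset `A`. -/
def IsCompletelyPositiveOn (φ : BH H → BH K) (A : Set (BH H)) : Prop :=
  ∀ (n : ℕ) (M : Matrix (Fin n) (Fin n) (BH H)), entriesIn M A →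
    (matOp M).IsPositive → (matOp (M.map φ)).IsPositive

/-- `φ` is completely contractive on the subset `A`. -/
def IsCompletelyContractiveOn (φ : BH H → BH K) (A : Set (BH H)) : Prop :=
  ∀ (n : ℕ) (M : Matrix (Fin n) (Fin n) (BH H)), entriesIn M A →
    ‖matOp (M.map φ)‖ ≤ ‖matOp M‖

/-- `φ` is completely isometric on the subset `A`. -/
def IsCompletelyIsometricOn (φ : BH H → BH K) (A : Set (BH H)) : Prop :=
  ∀ (n : ℕ) (M : Matrix (Fin n) (Fin n) (BH H)), entriesIn M A →
    ‖matOp (M.map φ)‖ = ‖matOp M‖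

/-- `φ` is a complete order embedding on the subset `A`: all matrix amplifications of `φ`
reflect and preserve positivity. -/
def IsCompleteOrderEmbeddingOn (φ : BH H → BH K) (A : Set (BH H)) : Prop :=
  ∀ (n : ℕ) (M : Matrix (Fin n) (Fin n) (BH H)), entriesIn M A →
    ((matOp (M.map φ)).IsPositive ↔ (matOp M).IsPositive)

/-- A unital completely positive map on the subset `A` (operator system). -/
def IsUCPOn (φ : BH H → BH K) (A : Set (BH H)) : Prop :=
  IsLinearOn φ A ∧ IsCompletelyPositiveOn φ A ∧ φ 1 = 1

/-- `A` is a (not necessarily unital, not necessarily closed) subalgebra of `B(H)`. -/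
def IsSubalgebra (A : Set (BH H)) : Prop :=
  (∀ x ∈ A, ∀ y ∈ A, x + y ∈ A) ∧ (∀ (c : ℂ), ∀ x ∈ A, c • x ∈ A) ∧
    (∀ x ∈ A, ∀ y ∈ A, x * y ∈ A)

/-- An operator algebra: a norm-closed subalgebra of the bounded operators. -/
def IsOperatorAlgebra (A : Set (BH H)) : Prop :=
  IsSubalgebra A ∧ IsClosed A

/-- A concrete C*-algebra: a norm-closed self-adjoint subalgebra of the bounded operators. -/
def IsCStarSubalgebra (B : Set (BH H)) : Prop :=
  IsOperatorAlgebra B ∧ ∀ x ∈ B, star x ∈ B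

/-- The C*-subalgebra of `B(K)` generated by a subset `S`. -/
def genCStar (S : Set (BH K)) : Set (BH K) :=
  ⋂₀ {B : Set (BH K) | IsCStarSubalgebra B ∧ S ⊆ B}

/-- The norm-closed (non-selfadjoint) operator algebra generated by a subset `S`. -/
def genOpAlg (S : Set (BH K)) : Set (BH K) :=
  ⋂₀ {B : Set (BH K) | IsOperatorAlgebra B ∧ S ⊆ B}

/-- `π` is nondegenerate on `A`: the images `π(a)ξ` have dense linear span. -/
def IsNondegenerateOn (π : BH H → BH K) (A : Set (BH H)) : Prop :=
  (Submodule.span ℂ {ξ : K | ∃ a ∈ A, ∃ η : K, π a η = ξ}).topologicalClosure = ⊤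

/-- `A` admits a contractive approximate identity (formulated via a filter/net). -/
def HasContractiveAI (A : Set (BH H)) : Prop :=
  ∃ l : Filter (BH H), l.NeBot ∧ (∀ᶠ x in l, x ∈ A ∧ ‖x‖ ≤ 1) ∧
    ∀ a ∈ A, Tendsto (fun x => x * a) l (nhds a) ∧ Tendsto (fun x => a * x) l (nhds a)

/-- `A` admits a self-adjoint contractive approximate identity. -/
def HasSAContractiveAI (A : Set (BH H)) : Prop :=
  ∃ l : Filter (BH H), l.NeBot ∧ (∀ᶠ x in l, x ∈ A ∧ IsSelfAdjoint x ∧ ‖x‖ ≤ 1) ∧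
    ∀ a ∈ A, Tendsto (fun x => x * a) l (nhds a) ∧ Tendsto (fun x => a * x) l (nhds a)

/-- `π` has the unique extension property with respect to the generating subalgebra `A` of
the C*-algebra `B`:  `π` is the unique completely contractive completely positive map on `B`
agreeing with `π` on `A`. -/
def HasUEP (π : BH H → BH K) (B A : Set (BH H)) : Prop :=
  ∀ ψ : BH H → BH K, IsLinearOn ψ B → IsCompletelyPositiveOn ψ B →
    IsCompletelyContractiveOn ψ B → (∀ a ∈ A, ψ a = π a) → ∀ b ∈ B, ψ b = π b

/-- `(genCStar (ε '' A), ε)` is a C*-envelope of the operator algebra `A`:  `ε` is a completely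
isometric representation and the generated C*-algebra has the co-universal property. -/
def IsCStarEnvelope.{v} (A : Set (BH H)) (ε : BH H → BH K) : Prop :=
  IsHomOn ε A ∧ IsCompletelyIsometricOn ε A ∧
  ∀ (K' : Type v) [instK'1 : NormedAddCommGroup K'] [instK'2 : InnerProductSpace ℂ K']
      [instK'3 : CompleteSpace K'] (ι : BH H → BH K'),
    IsHomOn ι A → IsCompletelyIsometricOn ι A →
    ∃ Φ : BH K' → BH K,
      IsStarHomOn Φ (genCStar (ι '' A)) ∧
      Φ '' (genCStar (ι '' A)) = genCStar (ε '' A) ∧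
      ∀ a ∈ A, Φ (ι a) = ε a

/-- The Loewner order: `T ≼ S`. -/
def opLE (T S : BH K) : Prop := (S - T).IsPositive

/-- `T` is the least upper bound in `B` of the subset `s`. -/
def IsLUBIn (B s : Set (BH K)) (T : BH K) : Prop :=
  T ∈ B ∧ (∀ x ∈ s, opLE x T) ∧ ∀ y ∈ B, (∀ x ∈ s, opLE x y) → opLE T y

/-- A subset of `B(K)` is monotone complete: every nonempty upward directed bounded family of
self-adjoint elements of `B` admits a least upper bound in `B`. -/
def IsMonotoneComplete (B : Set (BH K)) : Prop :=
  ∀ s ⊆ B, s.Nonempty → (∀ x ∈ s, IsSelfAdjoint x) → DirectedOn opLE s →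
    (∃ b : BH K, ∀ x ∈ s, opLE x b) → ∃ T, IsLUBIn B s T

end Basic

section Dynamics

variable (G : Type*) [Group G] [TopologicalSpace G]
variable {H K : Type*}
  [NormedAddCommGroup H] [InnerProductSpace ℂ H] [CompleteSpace H]
  [NormedAddCommGroup K] [InnerProductSpace ℂ K] [CompleteSpace K]

/-- A dynamical system: a point-norm continuous action of `G` on the operator algebra `A`
by completely isometric automorphisms. -/
def IsDynamicalSystem (A : Set (BH H)) (act : G → BH H → BH H) : Prop :=
  IsOperatorAlgebra A ∧
  (∀ g, Set.MapsTo (act g) A A) ∧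
  (∀ g, IsHomOn (act g) A) ∧
  (∀ a ∈ A, act 1 a = a) ∧
  (∀ g h, ∀ a ∈ A, act (g * h) a = act g (act h a)) ∧
  (∀ g, IsCompletelyIsometricOn (act g) A) ∧
  (∀ a ∈ A, Continuous fun g => act g a)

/-- A C*-dynamical system: a point-norm continuous action of `G` on the concrete
C*-algebra `B` by ∗-automorphisms. -/
def IsCStarDynamicalSystem (B : Set (BH H)) (act : G → BH H → BH H) : Prop :=
  IsCStarSubalgebra B ∧
  (∀ g, Set.MapsTo (act g) B B) ∧
  (∀ g, IsStarHomOn (act g) B) ∧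
  (∀ b ∈ B, act 1 b = b) ∧
  (∀ g h, ∀ b ∈ B, act (g * h) b = act g (act h b)) ∧
  (∀ b ∈ B, Continuous fun g => act g b)

end Dynamics

section Haar

variable (G : Type*) [Group G] [TopologicalSpace G] [IsTopologicalGroup G]
  [LocallyCompactSpace G] [T2Space G] [MeasurableSpace G] [BorelSpace G]

/-- Left Haar measure on `G`. -/
abbrev haarG : Measure G := Measure.haar

variable (K : Type*) [NormedAddCommGroup K] [InnerProductSpace ℂ K] [CompleteSpace K]

/-- The Hilbert space `L²(G, K) ≅ K ⊗ L²(G)` with respect to left Haar measure. -/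
abbrev L2 := Lp K 2 (haarG G)

variable {G K}

/-- `U` is (the ampliation of) the left regular representation `1 ⊗ λ` on `L²(G, K)`. -/
def IsTranslationRep (U : G → BH (L2 G K)) : Prop :=
  ∀ (g : G) (ξ : L2 G K), ⇑(U g ξ) =ᵐ[haarG G] fun h => ξ (g⁻¹ * h)

variable {H : Type*} [NormedAddCommGroup H] [InnerProductSpace ℂ H] [CompleteSpace H]

/-- `PA` is the multiplication representation `π_α` on `L²(G, K)` associated to a
representation `π` and an action `act`: `(π_α(a) ξ)(g) = π (α_g⁻¹ a) (ξ g)` for `a ∈ B`. -/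
def IsPiAlpha (act : G → BH H → BH H) (π : BH H → BH K) (B : Set (BH H))
    (PA : BH H → BH (L2 G K)) : Prop :=
  ∀ a ∈ B, ∀ ξ : L2 G K, ⇑(PA a ξ) =ᵐ[haarG G] fun g => π (act g⁻¹ a) (ξ g)

/-- The integrated form `σ(f) = ∫ π_α(f(g)) U(g) dg` of a covariant pair. -/
def integratedForm (PA : BH H → BH (L2 G K)) (U : G → BH (L2 G K)) (f : G → BH H) :
    BH (L2 G K) :=
  ∫ g, (PA (f g)) * (U g) ∂(haarG G)

/-- The reduced crossed product of (the closed subspace, subalgebra, …) `S` by `G`: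
the norm closure of the integrated forms of compactly supported continuous `S`-valued
functions. -/
def reducedCrossedProduct (S : Set (BH H)) (PA : BH H → BH (L2 G K))
    (U : G → BH (L2 G K)) : Set (BH (L2 G K)) :=
  closure {T | ∃ f : G → BH H, Continuous f ∧ HasCompactSupport f ∧ (∀ g, f g ∈ S) ∧
    T = integratedForm PA U f}

end Haar

section Fubini

variable {X : Type*} [MeasurableSpace X]
variable {H E : Type*} [NormedAddCommGroup H] [InnerProductSpace ℂ H] [CompleteSpace H]
  [NormedAddCommGroup E] [InnerProductSpace ℂ E] [CompleteSpace E]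

/-- The bounded measurable complex functions on `X` (the C*-algebra `M^∞(F)`). -/
def MInfty (X : Type*) [MeasurableSpace X] : Set (X → ℂ) :=
  {f | Measurable f ∧ ∃ C : ℝ, ∀ x, ‖f x‖ ≤ C}

/-- The ℓ²-direct sum of copies of `E` over `X`, i.e. `E ⊗ ℓ²(X)`. -/
abbrev ld2 (X : Type*) (E : Type*) [NormedAddCommGroup E] [InnerProductSpace ℂ E] :
    Type _ := lp (fun _ : X => E) 2

/-- `m` implements multiplication by bounded measurable functions on `L²(X, μ; E)`. -/
def IsMulRepL (μ : Measure X) (m : (X → ℂ) → BH (Lp E 2 μ)) : Prop :=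
  ∀ f ∈ MInfty X, ∀ ξ : Lp E 2 μ, ⇑(m f ξ) =ᵐ[μ] fun x => f x • ξ x

/-- `m` implements multiplication by bounded functions on `ℓ²(X; E)`. -/
def IsMulRepD (m : (X → ℂ) → BH (ld2 X E)) : Prop :=
  ∀ f ∈ MInfty X, ∀ (ξ : ld2 X E) (x : X), (m f ξ) x = f x • ξ x

/-- `oT` implements the elementary tensors `T ⊗ f` on `L²(X, μ; H) ≅ H ⊗ L²(X, μ)`. -/
def IsElemTensorRepL (μ : Measure X) (oT : BH H → (X → ℂ) → BH (Lp H 2 μ)) : Prop :=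
  ∀ (T : BH H), ∀ f ∈ MInfty X, ∀ ξ : Lp H 2 μ, ⇑(oT T f ξ) =ᵐ[μ] fun x => f x • T (ξ x)

/-- `oT` implements the elementary tensors `T ⊗ f` on `ℓ²(X; H) ≅ H ⊗ ℓ²(X)`. -/
def IsElemTensorRepD (oT : BH H → (X → ℂ) → BH (ld2 X H)) : Prop :=
  ∀ (T : BH H), ∀ f ∈ MInfty X, ∀ (ξ : ld2 X H) (x : X), (oT T f ξ) x = f x • T (ξ x)

/-- `J` is the family of isometries `J_i k = e_i ⊗ k`, i.e. `(J_i k)(x) = k(x) • e_i`, from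
`L²(X, μ)` into `L²(X, μ; H)`, associated with an orthonormal basis `e` of `H`. -/
def IsTensorIsometriesL (μ : Measure X) {ι : Type*} (e : ι → H)
    (J : ι → (Lp ℂ 2 μ →L[ℂ] Lp H 2 μ)) : Prop :=
  Orthonormal ℂ e ∧ (Submodule.span ℂ (Set.range e)).topologicalClosure = ⊤ ∧
    ∀ (i : ι) (k : Lp ℂ 2 μ), ⇑(J i k) =ᵐ[μ] fun x => k x • e i

/-- `J` is the family of isometries `J_i k = e_i ⊗ k` from `ℓ²(X)` into `ℓ²(X; H)`,
associated with an orthonormal basis `e` of `H`. -/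
def IsTensorIsometriesD {ι : Type*} (e : ι → H)
    (J : ι → (ld2 X ℂ →L[ℂ] ld2 X H)) : Prop :=
  Orthonormal ℂ e ∧ (Submodule.span ℂ (Set.range e)).topologicalClosure = ⊤ ∧
    ∀ (i : ι) (k : ld2 X ℂ) (x : X), (J i k) x = k x • e i

/-- Hamana's Fubini tensor product `B(H) ⊗̄ S`, relative to the family of isometries
`J_i = 1 ⊗ e_i`: the set of operators all of whose slices `J_i* x J_j` lie in `S`. -/
def fubini {KK HK : Type*} [NormedAddCommGroup KK] [InnerProductSpace ℂ KK] [CompleteSpace KK]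
    [NormedAddCommGroup HK] [InnerProductSpace ℂ HK] [CompleteSpace HK]
    {ι : Type*} (J : ι → (KK →L[ℂ] HK)) (S : Set (BH KK)) : Set (BH HK) :=
  {T | ∀ i j, (ContinuousLinearMap.adjoint (J i)).comp (T.comp (J j)) ∈ S}

/-- A lifting for the (complete) measure `μ`: a ∗-homomorphic selection
`L^∞(X, μ) → M^∞(F)`, described at the level of bounded measurable functions: it is
well defined on a.e.-classes and picks a genuine bounded measurable representative. -/
def IsLifting (μ : Measure X) (ρ : (X → ℂ) → (X → ℂ)) : Prop :=
  (∀ f ∈ MInfty X, ρ f ∈ MInfty X ∧ ρ f =ᵐ[μ] f) ∧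
  (∀ f ∈ MInfty X, ∀ g ∈ MInfty X, f =ᵐ[μ] g → ρ f = ρ g) ∧
  (ρ (fun _ => (1 : ℂ)) = fun _ => 1) ∧
  (∀ f ∈ MInfty X, ∀ g ∈ MInfty X, ρ (f + g) = ρ f + ρ g) ∧
  (∀ f ∈ MInfty X, ∀ g ∈ MInfty X, ρ (f * g) = ρ f * ρ g) ∧
  (∀ (c : ℂ), ∀ f ∈ MInfty X, ρ (c • f) = c • ρ f) ∧
  (∀ f ∈ MInfty X, ρ (star f) = star (ρ f))

end Fubini

section Correspondence

variable {H₀ KK : Type*}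
  [NormedAddCommGroup H₀] [InnerProductSpace ℂ H₀] [CompleteSpace H₀]
  [NormedAddCommGroup KK] [InnerProductSpace ℂ KK] [CompleteSpace KK]

/-- A (nondegenerate) C*-correspondence over `B`, concretely and riggedly represented:
`X` is a norm-closed subspace with `B·X ⊆ X`, `X·B ⊆ X`, `X*·X ⊆ B`, and the left action
of `B` on `X` is nondegenerate. The `B`-valued inner product is `⟨x, y⟩ = x* y`. -/
def IsConcreteCorrespondence (B X : Set (BH H₀)) : Prop :=
  IsCStarSubalgebra B ∧
  (IsClosed X ∧ (∀ x ∈ X, ∀ y ∈ X, x + y ∈ X) ∧ (∀ (c : ℂ), ∀ x ∈ X, c • x ∈ X)) ∧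
  (∀ b ∈ B, ∀ x ∈ X, b * x ∈ X) ∧
  (∀ x ∈ X, ∀ b ∈ B, x * b ∈ X) ∧
  (∀ x ∈ X, ∀ y ∈ X, star x * y ∈ B) ∧
  closure ((Submodule.span ℂ {z : BH H₀ | ∃ b ∈ B, ∃ x ∈ X, z = b * x} : Submodule ℂ (BH H₀)) :
    Set (BH H₀)) = X

/-- Katsura's ideal `J_X ⊆ B`: the elements acting as compact (i.e. norm limits of finite
sums of "rank one" operators `θ_{x,y} = x y*`) operators on `X` and orthogonal to the
kernel of the left action. -/
def KatsuraIdeal (B X : Set (BH H₀)) : Set (BH H₀) :=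
  {b | b ∈ B ∧ (∀ c ∈ B, (∀ x ∈ X, c * x = 0) → b * c = 0) ∧
    ∀ ε > (0:ℝ), ∃ (n : ℕ) (xs ys : Fin n → BH H₀), (∀ i, xs i ∈ X ∧ ys i ∈ X) ∧
      ∀ z ∈ X, ‖z‖ ≤ 1 → ‖b * z - ∑ i, xs i * star (ys i) * z‖ ≤ ε}

/-- A rigged (isometric) representation `(ρ, t)` of the C*-correspondence `(B, X)`. -/
def IsRiggedRep (B X : Set (BH H₀)) (ρ t : BH H₀ → BH KK) : Prop :=
  IsStarHomOn ρ B ∧ IsNondegenerateOn ρ B ∧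
  (∀ x ∈ X, ∀ y ∈ X, t (x + y) = t x + t y) ∧
  (∀ (c : ℂ), ∀ x ∈ X, t (c • x) = c • t x) ∧
  (∀ b ∈ B, ∀ x ∈ X, t (b * x) = ρ b * t x) ∧
  (∀ x ∈ X, ∀ b ∈ B, t (x * b) = t x * ρ b) ∧
  (∀ x ∈ X, ∀ y ∈ X, star (t x) * t y = ρ (star x * y))

/-- A covariant rigged representation: on Katsura's ideal, `ψ_t ∘ φ_X = ρ`. -/
def IsCovariantRep (B X : Set (BH H₀)) (ρ t : BH H₀ → BH KK) : Prop :=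
  IsRiggedRep B X ρ t ∧
  ∀ b ∈ KatsuraIdeal B X, ∀ ε > (0:ℝ), ∀ (n : ℕ) (xs ys : Fin n → BH H₀),
    (∀ i, xs i ∈ X ∧ ys i ∈ X) →
    (∀ z ∈ X, ‖z‖ ≤ 1 → ‖b * z - ∑ i, xs i * star (ys i) * z‖ ≤ ε) →
    ‖ρ b - ∑ i, t (xs i) * star (t (ys i))‖ ≤ ε

/-- `(ρ0, t0)` realizes the Toeplitz algebra `T_X`: a rigged representation which is
universal among all rigged representations of `(B, X)`. -/
def IsToeplitzAlgebra.{v} (B X : Set (BH H₀)) (ρ0 t0 : BH H₀ → BH KK) : Prop :=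
  IsRiggedRep B X ρ0 t0 ∧
  ∀ (K' : Type v) [instK'1 : NormedAddCommGroup K'] [instK'2 : InnerProductSpace ℂ K']
      [instK'3 : CompleteSpace K'] (ρ t : BH H₀ → BH K'),
    IsRiggedRep B X ρ t →
    ∃ Φ : BH KK → BH K',
      IsStarHomOn Φ (genCStar (ρ0 '' B ∪ t0 '' X)) ∧
      (∀ b ∈ B, Φ (ρ0 b) = ρ b) ∧ (∀ x ∈ X, Φ (t0 x) = t x)

/-- `(ρ0, t0)` realizes the Cuntz–Pimsner algebra `O_X`: a covariant rigged representation
which is universal among all covariant rigged representations of `(B, X)`. -/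
def IsCuntzPimsner.{v} (B X : Set (BH H₀)) (ρ0 t0 : BH H₀ → BH KK) : Prop :=
  IsCovariantRep B X ρ0 t0 ∧
  ∀ (K' : Type v) [instK'1 : NormedAddCommGroup K'] [instK'2 : InnerProductSpace ℂ K']
      [instK'3 : CompleteSpace K'] (ρ t : BH H₀ → BH K'),
    IsCovariantRep B X ρ t →
    ∃ Φ : BH KK → BH K',
      IsStarHomOn Φ (genCStar (ρ0 '' B ∪ t0 '' X)) ∧
      (∀ b ∈ B, Φ (ρ0 b) = ρ b) ∧ (∀ x ∈ X, Φ (t0 x) = t x)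

end Correspondence

/-! Conjugation by the unitaries `u g` is an action of `G` on `B(K)` by isometric
∗-automorphisms. It sends each generator `π a` to `π (α_g a)`, and the preimage of a
C*-algebra under a ∗-homomorphism is again a C*-algebra, so it preserves `C*(π(A))`.
For point-norm continuity, the operators with norm-continuous orbit form a C*-algebra which
contains the generators, since `g ↦ π (α_g a)` is continuous when `π` is contractive. -/

section CStarSubalgebra

variable {K L : Type*}
  [NormedAddCommGroup K] [InnerProductSpace ℂ K] [CompleteSpace K]
  [NormedAddCommGroup L] [InnerProductSpace ℂ L] [CompleteSpace L]

theorem isCStarSubalgebra_sInter {𝒞 : Set (Set (BH K))} (h𝒞 : ∀ C ∈ 𝒞, IsCStarSubalgebra C) :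
    IsCStarSubalgebra (⋂₀ 𝒞) := by
  refine ⟨⟨⟨?_, ?_, ?_⟩, isClosed_sInter fun C hC => (h𝒞 C hC).1.2⟩, ?_⟩ <;>
    simp only [mem_sInter]
  · exact fun x hx y hy C hC => (h𝒞 C hC).1.1.1 x (hx C hC) y (hy C hC)
  · exact fun c x hx C hC => (h𝒞 C hC).1.1.2.1 c x (hx C hC)
  · exact fun x hx y hy C hC => (h𝒞 C hC).1.1.2.2 x (hx C hC) y (hy C hC)
  · exact fun x hx C hC => (h𝒞 C hC).2 x (hx C hC)

theorem isCStarSubalgebra_genCStar (S : Set (BH K)) : IsCStarSubalgebra (genCStar S) :=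
  isCStarSubalgebra_sInter fun _ hC => hC.1

theorem subset_genCStar (S : Set (BH K)) : S ⊆ genCStar S :=
  subset_sInter fun _ hC => hC.2

theorem genCStar_subset {S C : Set (BH K)} (hC : IsCStarSubalgebra C) (hSC : S ⊆ C) :
    genCStar S ⊆ C :=
  sInter_subset_of_mem ⟨hC, hSC⟩

variable {F : Type*} [FunLike F (BH K) (BH L)] [NonUnitalAlgHomClass F ℂ (BH K) (BH L)]
  [StarHomClass F (BH K) (BH L)]

theorem isStarHomOn_starAlgHom (φ : F) (A : Set (BH K)) : IsStarHomOn φ A :=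
  ⟨⟨⟨fun x _ y _ => map_add φ x y, fun c x _ => map_smul φ c x⟩, fun x _ y _ => map_mul φ x y⟩,
    fun x _ => map_star φ x⟩

theorem lipschitzWith_one_starAlgHom (φ : F) : LipschitzWith 1 φ :=
  AddMonoidHomClass.lipschitz_of_bound_nnnorm φ 1 fun x => by
    simpa only [one_mul] using NonUnitalStarAlgHom.nnnorm_apply_le φ x

theorem IsCStarSubalgebra.preimage {C : Set (BH L)} (hC : IsCStarSubalgebra C) (φ : F) :
    IsCStarSubalgebra (φ ⁻¹' C) := by
  refine ⟨⟨⟨fun x hx y hy => ?_, fun c x hx => ?_, fun x hx y hy => ?_⟩,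
    hC.1.2.preimage (lipschitzWith_one_starAlgHom φ).continuous⟩, fun x hx => ?_⟩ <;>
    simp only [mem_preimage, map_add, map_smul, map_mul, map_star]
  · exact hC.1.1.1 _ hx _ hy
  · exact hC.1.1.2.1 c _ hx
  · exact hC.1.1.2.2 _ hx _ hy
  · exact hC.2 _ hx

theorem mapsTo_genCStar (φ : F) {S : Set (BH K)} {T : Set (BH L)} (h : MapsTo φ S T) :
    MapsTo φ (genCStar S) (genCStar T) :=
  genCStar_subset ((isCStarSubalgebra_genCStar T).preimage φ)
    (h.mono_right (subset_genCStar T))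

/-- Closed since all `φ g` are `1`-Lipschitz: orbits of nearby points are uniformly close. -/
theorem isCStarSubalgebra_setOf_continuous {G : Type*} [TopologicalSpace G] (φ : G → F) :
    IsCStarSubalgebra {x : BH K | Continuous fun g => φ g x} := by
  have hclosed : IsClosed {x : BH K | Continuous fun g => φ g x} := by
    have hlip : LipschitzWith 1 fun x : BH K => UniformFun.ofFun fun g => φ g x :=
      UniformFun.lipschitzWith_ofFun_iff.mpr fun g => lipschitzWith_one_starAlgHom (φ g)
    exact (UniformFun.isClosed_setOfPred_continuous (α := G) (β := BH L)).preimage hlip.continuous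
  refine ⟨⟨⟨fun x hx y hy => ?_, fun c x hx => ?_, fun x hx y hy => ?_⟩, hclosed⟩,
    fun x hx => ?_⟩ <;> simp only [mem_ofPred_eq, map_add, map_smul, map_mul, map_star]
  · exact hx.add hy
  · exact hx.const_smul c
  · exact hx.mul hy
  · exact hx.star

end CStarSubalgebra

theorem norm_piLp_fin_one {E : Type*} [SeminormedAddCommGroup E] (ξ : PiLp 2 fun _ : Fin 1 => E) :
    ‖ξ‖ = ‖ξ 0‖ := by
  have h := PiLp.norm_sq_eq_of_L2 (fun _ : Fin 1 => E) ξ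
  rw [Fin.sum_univ_one] at h
  exact (sq_eq_sq₀ (norm_nonneg _) (norm_nonneg _)).mp h

section Contractive

variable {H K : Type*}
  [NormedAddCommGroup H] [InnerProductSpace ℂ H] [CompleteSpace H]
  [NormedAddCommGroup K] [InnerProductSpace ℂ K] [CompleteSpace K]

theorem matOp_fin_one_apply (M : Matrix (Fin 1) (Fin 1) (BH H))
    (ξ : PiLp 2 fun _ : Fin 1 => H) : matOp M ξ 0 = M 0 0 (ξ 0) := by
  simp [matOp]

theorem norm_matOp_fin_one (M : Matrix (Fin 1) (Fin 1) (BH H)) : ‖matOp M‖ = ‖M 0 0‖ := by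
  refine le_antisymm (ContinuousLinearMap.opNorm_le_bound _ (norm_nonneg _) fun ξ => ?_)
    (ContinuousLinearMap.opNorm_le_bound _ (norm_nonneg _) fun x => ?_)
  · rw [norm_piLp_fin_one, norm_piLp_fin_one, matOp_fin_one_apply]
    exact (M 0 0).le_opNorm (ξ 0)
  · let ξ : PiLp 2 fun _ : Fin 1 => H := WithLp.toLp 2 fun _ => x
    calc ‖M 0 0 x‖ = ‖matOp M ξ‖ := by rw [norm_piLp_fin_one, matOp_fin_one_apply]
      _ ≤ ‖matOp M‖ * ‖ξ‖ := (matOp M).le_opNorm ξ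
      _ = ‖matOp M‖ * ‖x‖ := by rw [norm_piLp_fin_one]

theorem IsCompletelyContractiveOn.norm_apply_le {π : BH H → BH K} {A : Set (BH H)}
    (hπ : IsCompletelyContractiveOn π A) {a : BH H} (ha : a ∈ A) : ‖π a‖ ≤ ‖a‖ := by
  simpa [norm_matOp_fin_one] using hπ 1 (Matrix.of fun _ _ => a) fun _ _ => ha

theorem IsLinearOn.map_sub {π : BH H → BH K} {A : Set (BH H)} (hπ : IsLinearOn π A)
    (hA : IsSubalgebra A) {x y : BH H} (hx : x ∈ A) (hy : y ∈ A) :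
    π (x - y) = π x - π y := by
  have hy' : (-1 : ℂ) • y ∈ A := hA.2.1 (-1) y hy
  simpa only [neg_one_smul, ← sub_eq_add_neg] using
    (hπ.1 x hx _ hy').trans (congrArg (π x + ·) (hπ.2 (-1) y hy))

theorem IsSubalgebra.sub_mem {A : Set (BH H)} (hA : IsSubalgebra A) {x y : BH H}
    (hx : x ∈ A) (hy : y ∈ A) : x - y ∈ A := by
  simpa only [neg_one_smul, ← sub_eq_add_neg] using hA.1 x hx _ (hA.2.1 (-1) y hy)

theorem IsCompletelyContractiveOn.lipschitzOnWith {π : BH H → BH K} {A : Set (BH H)}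
    (hA : IsSubalgebra A) (hlin : IsLinearOn π A) (hπ : IsCompletelyContractiveOn π A) :
    LipschitzOnWith 1 π A :=
  LipschitzOnWith.of_dist_le_mul fun x hx y hy => by
    simpa only [NNReal.coe_one, one_mul, dist_eq_norm, ← hlin.map_sub hA hx hy] using
      hπ.norm_apply_le (hA.sub_mem hx hy)

end Contractive

def unitaryHom {G R : Type*} [Monoid G] [Monoid R] [StarMul R] (u : G → R)
    (hu_unitary : ∀ g, u g * star (u g) = 1 ∧ star (u g) * u g = 1) (hu_one : u 1 = 1)
    (hu_mul : ∀ g h, u (g * h) = u g * u h) : G →* unitary R :=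
  (MonoidHom.mk ⟨u, hu_one⟩ hu_mul).codRestrict (unitary R) fun g =>
    ⟨(hu_unitary g).2, (hu_unitary g).1⟩

theorem statement5_general {H K G : Type u}
    [NormedAddCommGroup H] [InnerProductSpace ℂ H] [CompleteSpace H]
    [NormedAddCommGroup K] [InnerProductSpace ℂ K] [CompleteSpace K]
    [Group G] [TopologicalSpace G]
    (A : Set (BH H)) (act : G → BH H → BH H)
    (hdyn : IsDynamicalSystem G A act)
    (π : BH H → BH K) (u : G → BH K)
    (hπhom : IsHomOn π A) (hπcc : IsCompletelyContractiveOn π A)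
    (hu_unitary : ∀ g, u g * star (u g) = 1 ∧ star (u g) * u g = 1)
    (hu_one : u 1 = 1)
    (hu_mul : ∀ g h, u (g * h) = u g * u h)
    (hcov : ∀ g, ∀ a ∈ A, π (act g a) = u g * π a * star (u g)) :
    IsCStarDynamicalSystem G (genCStar (π '' A)) (fun g T => u g * T * star (u g)) ∧
      ∀ g, ∀ a ∈ A, u g * π a * star (u g) = π (act g a) := by
  obtain ⟨hA, hmaps, -, -, -, -, hcont⟩ := hdyn
  let U := unitaryHom u hu_unitary hu_one hu_mul
  let α : G → BH K ≃⋆ₐ[ℂ] BH K := fun g => Unitary.conjStarAlgAut ℂ (BH K) (U g)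
  have hgen : ∀ g, MapsTo (α g) (π '' A) (π '' A) := by
    rintro g _ ⟨a, ha, rfl⟩
    exact ⟨act g a, hmaps g ha, hcov g a ha⟩
  have horbit : π '' A ⊆ {T | Continuous fun g => α g T} := by
    rintro _ ⟨a, ha, rfl⟩
    change Continuous fun g => u g * π a * star (u g)
    simp only [← hcov _ a ha]
    exact (hπcc.lipschitzOnWith hA.1 hπhom.1).continuousOn.comp_continuous (hcont a ha)
      fun g => hmaps g ha
  refine ⟨⟨isCStarSubalgebra_genCStar _,
    fun g => mapsTo_genCStar (α g) (hgen g),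
    fun g => isStarHomOn_starAlgHom (α g) _, fun b _ => ?_, fun g h b _ => ?_,
    genCStar_subset (isCStarSubalgebra_setOf_continuous α) horbit⟩,
    fun g a ha => (hcov g a ha).symm⟩
  · change α 1 b = b
    simp [α, map_one]
  · change α (g * h) b = α g (α h b)
    simp [α, map_mul]

/-- If `(A, G, α)` is a dynamical system and `(π, u)` is a covariant pair for
`(A, G, α)` on `K`, then `π` is `α`-admissible: `α̂_g(T) = u_g T u_g*` defines a point-norm
continuous action of `G` on `C*(π(A))` by ∗-automorphisms satisfying `α̂_g ∘ π = π ∘ α_g`. -/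
theorem statement5 {H K G : Type u}
    [NormedAddCommGroup H] [InnerProductSpace ℂ H] [CompleteSpace H]
    [NormedAddCommGroup K] [InnerProductSpace ℂ K] [CompleteSpace K]
    [Group G] [TopologicalSpace G] [IsTopologicalGroup G] [LocallyCompactSpace G] [T2Space G]
    (A : Set (BH H)) (act : G → BH H → BH H)
    (hAI : HasContractiveAI A)
    (hdyn : IsDynamicalSystem G A act)
    (π : BH H → BH K) (u : G → BH K)
    (hπhom : IsHomOn π A) (hπcc : IsCompletelyContractiveOn π A)
    (hπnd : IsNondegenerateOn π A)
    (hu_unitary : ∀ g, u g * star (u g) = 1 ∧ star (u g) * u g = 1)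
    (hu_one : u 1 = 1)
    (hu_mul : ∀ g h, u (g * h) = u g * u h)
    (hu_cont : ∀ ξ : K, Continuous fun g => u g ξ)
    (hcov : ∀ g, ∀ a ∈ A, π (act g a) = u g * π a * star (u g)) :
    IsCStarDynamicalSystem G (genCStar (π '' A)) (fun g T => u g * T * star (u g)) ∧
      ∀ g, ∀ a ∈ A, u g * π a * star (u g) = π (act g a) :=
  statement5_general A act hdyn π u hπhom hπcc hu_unitary hu_one hu_mul hcov

end Paper
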